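/- Let k be a field and G a group. An element a of the group algebra MonoidAlgebra k G is group-like if and only if a is the basis element corresponding to some g ∈ G (i.e., a = single g 1). In other words, the group of group-like elements of k[G] is exactly G. -/

import Mathlib

open scoped TensorProduct

private lemma lequiv_map_sum {R M N ι : Type*} [CommSemiring R] [AddCommMonoid M]
    [AddCommMonoid N] [Module R M] [Module R N] (e : M ≃ₗ[R] N) (s : Finset ι) (f : ι → M) :
    e (∑ x ∈ s, f x) = ∑ x ∈ s, e (f x) :=
  map_sum (e : M →ₗ[R] N) f s

private lemma lequiv_map_smul {R M N : Type*} [CommSemiring R] [AddCommMonoid M]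
    [AddCommMonoid N] [Module R M] [Module R N] (e : M ≃ₗ[R] N) (c : R) (x : M) :
    e (c • x) = c • e x :=
  map_smul (e : M →ₗ[R] N) c x

private noncomputable def coeffTensorEquiv (k G : Type*) [Field k] [Group G] :
    (MonoidAlgebra k G ⊗[k] MonoidAlgebra k G) ≃ₗ[k] (G × G →₀ k) :=
  (TensorProduct.congr (MonoidAlgebra.coeffLinearEquiv k) (MonoidAlgebra.coeffLinearEquiv k)).trans
    (finsuppTensorFinsupp' k G G)

/-- Let `ΔG` and `εG` be the comultiplication and counit of the group
algebra `MonoidAlgebra k G`, i.e. the algebra maps determined by `ΔG g = g ⊗ₜ g` and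
`εG g = 1` on group elements.  An element `a` of the group algebra is group-like
(`ΔG a = a ⊗ₜ a` and `εG a = 1`) if and only if `a` is the basis element
corresponding to some `g ∈ G`.  In other words, `Γ(kG) = G`. -/
theorem stmt3 (k : Type*) [Field k] (G : Type*) [Group G]
    (ΔG : MonoidAlgebra k G →ₐ[k] MonoidAlgebra k G ⊗[k] MonoidAlgebra k G)
    (hΔG : ∀ g : G, ΔG (MonoidAlgebra.of k G g) =
      MonoidAlgebra.of k G g ⊗ₜ[k] MonoidAlgebra.of k G g)
    (εG : MonoidAlgebra k G →ₐ[k] k)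
    (hεG : ∀ g : G, εG (MonoidAlgebra.of k G g) = 1)
    (a : MonoidAlgebra k G) :
    (ΔG a = a ⊗ₜ[k] a ∧ εG a = 1) ↔
      ∃ g : G, a = MonoidAlgebra.single g (1 : k) := by
  classical
  constructor
  · rintro ⟨hΔ, hε⟩
    have key : ∀ g h : G, a.coeff g * a.coeff h = if g = h then a.coeff g else 0 := by
      intro g h
      have h1 : (coeffTensorEquiv k G (ΔG a)) (g, h) = if g = h then a.coeff g else 0 := by
        have expand : ΔG a = ∑ x ∈ a.coeff.support,
            a.coeff x • (MonoidAlgebra.of k G x ⊗ₜ[k] MonoidAlgebra.of k G x) := by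
          conv_lhs => rw [← MonoidAlgebra.sum_coeff_single a]
          rw [map_finsuppSum, Finsupp.sum]
          refine Finset.sum_congr rfl fun x hx => ?_
          have hx' : (MonoidAlgebra.single x (a.coeff x) : MonoidAlgebra k G)
              = a.coeff x • MonoidAlgebra.of k G x := by
            ext y; simp [MonoidAlgebra.of_apply, MonoidAlgebra.coeff_single, Finsupp.single_apply]
          rw [hx', map_smul, hΔG]
        have expand2 : coeffTensorEquiv k G (ΔG a)
            = ∑ x ∈ a.coeff.support, Finsupp.single (x, x) (a.coeff x) := by
          rw [expand, lequiv_map_sum]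
          refine Finset.sum_congr rfl fun x _ => ?_
          rw [lequiv_map_smul]
          simp only [coeffTensorEquiv, LinearEquiv.trans_apply, TensorProduct.congr_tmul,
            MonoidAlgebra.of_apply]
          erw [finsuppTensorFinsupp'_single_tmul_single]
          rw [mul_one, Finsupp.smul_single, smul_eq_mul, mul_one]
        rw [expand2, Finsupp.finset_sum_apply]
        simp only [Finsupp.single_apply, Prod.mk.injEq]
        by_cases hgh : g = h
        · subst hgh
          by_cases hg : g ∈ a.coeff.support
          · rw [Finset.sum_eq_single g]
            · simp
            · intro b _ hb; simp [hb]
            · intro hgg; exact absurd hg hgg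
          · simp only [Finsupp.notMem_support_iff] at hg
            rw [hg, if_pos rfl]
            apply Finset.sum_eq_zero
            intro b hb
            rcases eq_or_ne b g with rfl | hbg
            · simp [hg]
            · simp [hbg]
        · rw [if_neg hgh]
          apply Finset.sum_eq_zero
          intro b _
          rcases eq_or_ne b g with rfl | hbg
          · simp [hgh]
          · simp [hbg]
      have h2 : (coeffTensorEquiv k G (a ⊗ₜ[k] a)) (g, h) = a.coeff g * a.coeff h :=
        finsuppTensorFinsupp'_apply_apply k G G a.coeff a.coeff g h
      rw [hΔ] at h1
      rw [← h2]
      exact h1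
    have hne : a ≠ 0 := by
      rintro rfl
      rw [map_zero] at hε
      exact zero_ne_one hε
    obtain ⟨g, hg⟩ := Finsupp.support_nonempty_iff.mpr (by simpa using hne : a.coeff ≠ 0)
    have hag : a.coeff g ≠ 0 := Finsupp.mem_support_iff.mp hg
    have hag1 : a.coeff g = 1 := by
      have h := key g g
      rw [if_pos rfl] at h
      exact mul_left_cancel₀ hag (by rw [h, mul_one])
    refine ⟨g, ?_⟩
    ext x
    rcases eq_or_ne x g with rfl | hx
    · simp [Finsupp.single_apply, hag1, MonoidAlgebra.coeff_single]
    · have h := key g x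
      rw [if_neg (Ne.symm hx)] at h
      have hx0 : a.coeff x = 0 := by
        rcases mul_eq_zero.mp h with h' | h'
        · exact absurd h' hag
        · exact h'
      simp [Finsupp.single_apply, hx0, Ne.symm hx, MonoidAlgebra.coeff_single]
  · rintro ⟨g, rfl⟩
    rw [show (MonoidAlgebra.single g (1:k) : MonoidAlgebra k G) = MonoidAlgebra.of k G g from
      (MonoidAlgebra.of_apply k G g).symm]
    exact ⟨hΔG g, hεG g⟩
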